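/- Let C ⊂ ℝ^k be the simplicial cone generated by linearly independent vectors α_1,…,α_k ∈ ℚ^k whose ℤ-span Λ_C* contains ℤ^k, let Λ_C be the dual lattice of Λ_C* and Γ_C = ℤ^k/Λ_C (a finite group, where ℤ^k is the dual lattice of (ℤ^k)* = ℤ^k). For γ ∈ Γ_C set c_j(γ) = exp(2πi⟨α_j, γ⟩). Then for all ξ ∈ ℂ^k such that Re(2πi⟨μ,ξ⟩) < 0 for all nonzero μ ∈ C ∩ ℤ^k, we have (1/#Γ_C) Σ_{γ∈Γ_C} ∏_{j=1}^k (1 - c_j(γ) e^{2πi⟨α_j,ξ⟩})^{-1} = Σ_{μ ∈ C ∩ ℤ^k} e^{2πi⟨μ,ξ⟩}. -/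

import Mathlib

open Complex Finset

/-!
Write `q_j = e(⟨α_j, ξ⟩)`; some positive multiple of `α_j` is a nonzero lattice point of the cone,
so `‖q_j‖ < 1` and each factor `(1 - c_j(γ) q_j)⁻¹` is a geometric series. The term of the product
indexed by `n ∈ ℕ^k` is `e(⟨β_n, γ⟩) e(⟨β_n, ξ⟩)` with `β_n = ∑ n_j α_j`, and averaging the
character `γ ↦ e(⟨β_n, γ⟩)` of `ℤ^k/Λ_C` kills it unless `β_n ∈ ℤ^k`. Finally `n ↦ β_n` is a
bijection from these `n` onto `C ∩ ℤ^k`: injective by linear independence, and surjective because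
`ℤ^k ⊆ Λ_C*` writes a lattice point of `C` as an integral combination of the `α_j`, whose
coefficients must be its (nonnegative) cone coordinates.
-/

section MultiGeometric

lemma prod_pow_comp_consEquiv {M : Type*} [CommMonoid M] {k : ℕ} (x : Fin (k + 1) → M) :
    (fun n : Fin (k + 1) → ℕ => ∏ j, x j ^ n j) ∘ Fin.consEquiv (fun _ => ℕ) =
      fun p : ℕ × (Fin k → ℕ) => x 0 ^ p.1 * ∏ j, x j.succ ^ p.2 j := by
  ext p
  simp [Fin.prod_univ_succ, Fin.consEquiv]

variable {𝕜 : Type*} [NormedField 𝕜]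

lemma summable_norm_prod_pow {k : ℕ} (x : Fin k → 𝕜) (hx : ∀ j, ‖x j‖ < 1) :
    Summable fun n : Fin k → ℕ => ‖∏ j, x j ^ n j‖ := by
  induction k with
  | zero => exact .of_finite
  | succ k ih =>
    rw [← (Fin.consEquiv fun _ => ℕ).summable_iff]
    have h := (summable_norm_geometric_of_norm_lt_one (hx 0)).mul_norm (ih _ fun j => hx j.succ)
    convert h using 2 with p
    exact congrArg norm (congrFun (prod_pow_comp_consEquiv x) p)

lemma hasSum_prod_pow [CompleteSpace 𝕜] {k : ℕ} (x : Fin k → 𝕜) (hx : ∀ j, ‖x j‖ < 1) :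
    HasSum (fun n : Fin k → ℕ => ∏ j, x j ^ n j) (∏ j, (1 - x j)⁻¹) := by
  induction k with
  | zero => simp
  | succ k ih =>
    rw [← (Fin.consEquiv fun _ => ℕ).hasSum_iff, prod_pow_comp_consEquiv, Fin.prod_univ_succ]
    have hprod := summable_mul_of_summable_norm (summable_norm_geometric_of_norm_lt_one (hx 0))
      (summable_norm_prod_pow _ fun j => hx j.succ)
    have hsum := (hasSum_geometric_of_norm_lt_one (hx 0)).mul (ih _ fun j => hx j.succ) hprod
    exact hsum

end MultiGeometric

namespace AddChar

variable {G M : Type*} [AddCommGroup G] [CommMonoid M] (ψ : AddChar G M) (N : AddSubgroup G)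
  (hN : ∀ g ∈ N, ψ g = 1)

def liftQuotient : AddChar (G ⧸ N) M :=
  toAddMonoidHomEquiv.symm (QuotientAddGroup.lift N ψ.toAddMonoidHom hN)

@[simp]
lemma liftQuotient_mk (g : G) : ψ.liftQuotient N hN g = ψ g := rfl

lemma liftQuotient_eq_zero_iff : ψ.liftQuotient N hN = 0 ↔ ψ = 0 := by
  simp only [eq_zero_iff, QuotientAddGroup.mk_surjective.forall, liftQuotient_mk]

end AddChar

section Characters

variable {ι : Type*} [Fintype ι]

noncomputable def expPair (β : ι → ℚ) (w : ι → ℂ) : ℂ :=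
  exp (2 * Real.pi * I * ∑ i, (β i : ℂ) * w i)

lemma expPair_sum_smul {κ : Type*} [Fintype κ] (α : κ → ι → ℚ) (n : κ → ℕ) (w : ι → ℂ) :
    expPair (∑ j, (n j : ℚ) • α j) w = ∏ j, expPair (α j) w ^ n j := by
  simp only [expPair, ← exp_nat_mul, ← exp_sum]
  congr 1
  simp only [Finset.sum_apply, Pi.smul_apply, smul_eq_mul, Rat.cast_sum, Rat.cast_mul,
    Rat.cast_natCast, Finset.mul_sum, Finset.sum_mul]
  rw [Finset.sum_comm]
  exact Finset.sum_congr rfl fun i _ => Finset.sum_congr rfl fun j _ => by ring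

lemma expPair_eq_one_of_sum_mul_eq_intCast (β : ι → ℚ) (v : ι → ℤ)
    (h : ∃ m : ℤ, ∑ i, β i * v i = m) : expPair β (fun i => v i) = 1 := by
  obtain ⟨m, hm⟩ := h
  have hm' : ∑ i, (β i : ℂ) * (v i : ℂ) = m := by exact_mod_cast congrArg (Rat.cast : ℚ → ℂ) hm
  rw [expPair, hm', mul_comm]
  exact exp_int_mul_two_pi_mul_I m

noncomputable def pairingChar (β : ι → ℚ) : AddChar (ι → ℤ) ℂ where
  toFun v := expPair β fun i => v i
  map_zero_eq_one' := by simp [expPair]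
  map_add_eq_mul' v w := by
    simp only [expPair, ← exp_add, ← mul_add, ← sum_add_distrib, Pi.add_apply, Int.cast_add]

@[simp]
lemma pairingChar_apply (β : ι → ℚ) (v : ι → ℤ) : pairingChar β v = expPair β fun i => v i := rfl

lemma pairingChar_eq_zero_iff [DecidableEq ι] (β : ι → ℚ) :
    pairingChar β = 0 ↔ ∃ μ : ι → ℤ, (fun i => (μ i : ℚ)) = β := by
  constructor
  · intro h
    have hi : ∀ i, ∃ m : ℤ, β i = m := by
      intro i
      have h1 := AddChar.eq_zero_iff.mp h (Pi.single i 1)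
      simp only [pairingChar_apply, expPair, Pi.single_apply, Int.cast_ite, Int.cast_one,
        Int.cast_zero, mul_ite, mul_one, mul_zero, sum_ite_eq', mem_univ, ↓reduceIte] at h1
      obtain ⟨m, hm⟩ := exp_eq_one_iff.mp h1
      refine ⟨m, ?_⟩
      have h2pi : 2 * (Real.pi : ℂ) * I ≠ 0 := by simp [Real.pi_ne_zero]
      have : (β i : ℂ) = m := mul_right_cancel₀ h2pi (by rw [← hm]; ring)
      exact_mod_cast this
    choose μ hμ using hi
    exact ⟨μ, funext fun i => (hμ i).symm⟩
  · rintro ⟨μ, rfl⟩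
    refine AddChar.eq_zero_iff.mpr fun v => expPair_eq_one_of_sum_mul_eq_intCast _ v
      ⟨∑ i, μ i * v i, by push_cast; rfl⟩

open Classical in
lemma sum_liftQuotient_pairingChar [DecidableEq ι] (Λ : AddSubgroup (ι → ℤ))
    [Fintype ((ι → ℤ) ⧸ Λ)] (β : ι → ℚ) (hβ : ∀ v ∈ Λ, pairingChar β v = 1) :
    ∑ γ, (pairingChar β).liftQuotient Λ hβ γ =
      if ∃ μ : ι → ℤ, (fun i => (μ i : ℚ)) = β then (Fintype.card ((ι → ℤ) ⧸ Λ) : ℂ) else 0 := by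
  simp only [AddChar.sum_eq_ite, AddChar.liftQuotient_eq_zero_iff, pairingChar_eq_zero_iff]

lemma norm_pairingChar (β : ι → ℚ) (v : ι → ℤ) : ‖pairingChar β v‖ = 1 := by
  have h : 2 * Real.pi * I * ∑ i, (β i : ℂ) * (v i : ℂ) =
      ((2 * Real.pi * ∑ i, (β i : ℝ) * v i : ℝ) : ℂ) * I := by
    push_cast; ring
  rw [pairingChar_apply, expPair, h, norm_exp_ofReal_mul_I]

lemma hasSum_pairingChar_mul_expPair {k : ℕ} (α : Fin k → ι → ℚ) (ξ : ι → ℂ)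
    (hξ : ∀ j, ‖expPair (α j) ξ‖ < 1) (v : ι → ℤ) :
    HasSum (fun n : Fin k → ℕ =>
        pairingChar (∑ j, (n j : ℚ) • α j) v * expPair (∑ j, (n j : ℚ) • α j) ξ)
      (∏ j, (1 - pairingChar (α j) v * expPair (α j) ξ)⁻¹) := by
  have hx : ∀ j, ‖pairingChar (α j) v * expPair (α j) ξ‖ < 1 := fun j => by
    rw [norm_mul, norm_pairingChar, one_mul]
    exact hξ j
  have hterm : ∀ n : Fin k → ℕ, ∏ j, (pairingChar (α j) v * expPair (α j) ξ) ^ n j =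
      pairingChar (∑ j, (n j : ℚ) • α j) v * expPair (∑ j, (n j : ℚ) • α j) ξ := fun n => by
    simp only [pairingChar_apply, expPair_sum_smul, mul_pow, prod_mul_distrib]
  simpa only [hterm] using hasSum_prod_pow _ hx

end Characters

section Cone

variable {ι κ : Type*} [Fintype ι] [Fintype κ]

def InCone (α : κ → ι → ℚ) (μ : ι → ℤ) : Prop :=
  ∃ t : κ → ℝ, (∀ j, 0 ≤ t j) ∧ ∀ i, (μ i : ℝ) = ∑ j, t j * (α j i : ℝ)

lemma exists_pos_nat_mul_eq_intCast (β : ι → ℚ) :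
    ∃ N : ℕ, 0 < N ∧ ∃ μ : ι → ℤ, ∀ i, (N : ℚ) * β i = μ i := by
  refine ⟨∏ i, (β i).den, prod_pos fun i _ => (β i).pos,
    fun i => ((∏ j, (β j).den) / (β i).den : ℕ) * (β i).num, fun i => ?_⟩
  have hd : (β i).den ∣ ∏ j, (β j).den := dvd_prod_of_mem _ (mem_univ i)
  have hden : ((β i).den : ℚ) ≠ 0 := Nat.cast_ne_zero.mpr (β i).den_nz
  rw [Int.cast_mul, Int.cast_natCast, Nat.cast_div hd hden, ← Rat.mul_den_eq_num]
  field_simp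

lemma norm_expPair_lt_one [DecidableEq κ] {α : κ → ι → ℚ} (hα : ∀ j, α j ≠ 0) {ξ : ι → ℂ}
    (hξ : ∀ μ : ι → ℤ, μ ≠ 0 → InCone α μ → (2 * Real.pi * I * ∑ i, (μ i : ℂ) * ξ i).re < 0)
    (j : κ) : ‖expPair (α j) ξ‖ < 1 := by
  obtain ⟨N, hN, μ, hμ⟩ := exists_pos_nat_mul_eq_intCast (α j)
  have hμ0 : μ ≠ 0 := by
    rintro rfl
    refine hα j (funext fun i => ?_)
    simpa [hN.ne'] using hμ i
  have hcone : InCone α μ := by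
    refine ⟨Pi.single j (N : ℝ), fun j' => ?_, fun i => ?_⟩
    · rcases eq_or_ne j' j with rfl | h <;> simp [*]
    · simpa [Pi.single_apply] using (by exact_mod_cast (hμ i).symm : (μ i : ℝ) = N * α j i)
  have hscale : 2 * Real.pi * I * ∑ i, (μ i : ℂ) * ξ i =
      N * (2 * Real.pi * I * ∑ i, (α j i : ℂ) * ξ i) := by
    have hμC : ∀ i, (μ i : ℂ) = N * (α j i : ℂ) := fun i => by exact_mod_cast (hμ i).symm
    simp_rw [hμC, mul_assoc, ← mul_sum]
    ring
  have hre := hξ μ hμ0 hcone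
  rw [hscale, ← ofReal_natCast, re_ofReal_mul] at hre
  rw [expPair, norm_exp]
  exact Real.exp_lt_one_iff.mpr (neg_of_mul_neg_right hre (Nat.cast_nonneg N))

lemma LinearIndependent.ratCast [DecidableEq ι] (K : Type*) [Field K] [CharZero K]
    {α : ι → ι → ℚ} (h : LinearIndependent ℚ α) :
    LinearIndependent K fun j i => (α j i : K) :=
  Matrix.linearIndependent_rows_iff_isUnit.mpr
    ((Matrix.linearIndependent_rows_iff_isUnit.mp h).map (Rat.castHom K).mapMatrix)

variable {α : ι → ι → ℚ}

lemma LinearIndependent.injective_sum_natCast_smul (hind : LinearIndependent ℚ α) :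
    Function.Injective fun n : ι → ℕ => ∑ j, (n j : ℚ) • α j := fun n n' h =>
  funext fun j => by exact_mod_cast Fintype.linearIndependent_iffₛ.mp hind _ _ h j

variable [DecidableEq ι]

lemma exists_nat_coeffs_of_inCone (hind : LinearIndependent ℚ α)
    (hcont : ∀ m : ι → ℤ, (fun i => (m i : ℚ)) ∈ Submodule.span ℤ (Set.range α))
    {μ : ι → ℤ} (hμ : InCone α μ) : ∃ n : ι → ℕ, ∑ j, (n j : ℚ) • α j = fun i => (μ i : ℚ) := by
  obtain ⟨t, ht0, htμ⟩ := hμ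
  obtain ⟨c, hc⟩ := (Submodule.mem_span_range_iff_exists_fun ℤ).mp (hcont μ)
  have hct : ∀ j, (c j : ℝ) = t j := by
    refine Fintype.linearIndependent_iffₛ.mp (hind.ratCast ℝ) _ _ (funext fun i => ?_)
    have hci := congrFun hc i
    simp only [Finset.sum_apply, zsmul_eq_mul] at hci
    simp only [Finset.sum_apply, Pi.smul_apply, smul_eq_mul, ← htμ i]
    exact_mod_cast hci
  refine ⟨fun j => (c j).toNat, ?_⟩
  rw [← hc]
  refine Finset.sum_congr rfl fun j _ => ?_
  have hc0 : 0 ≤ c j := by exact_mod_cast (hct j).symm ▸ ht0 j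
  have htoNat : ((c j).toNat : ℚ) = c j := by exact_mod_cast Int.toNat_of_nonneg hc0
  rw [← Int.cast_smul_eq_zsmul ℚ, htoNat]

open Classical in
lemma tsum_ite_eq_tsum_inCone (hind : LinearIndependent ℚ α)
    (hcont : ∀ m : ι → ℤ, (fun i => (m i : ℚ)) ∈ Submodule.span ℤ (Set.range α))
    (f : (ι → ℚ) → ℂ) :
    ∑' n : ι → ℕ, (if ∃ μ : ι → ℤ, (fun i => (μ i : ℚ)) = ∑ j, (n j : ℚ) • α j
        then f (∑ j, (n j : ℚ) • α j) else 0) =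
      ∑' μ : {μ : ι → ℤ // InCone α μ}, f fun i => (μ.1 i : ℚ) := by
  choose coeffs hcoeffs using fun μ : {μ // InCone α μ} => exists_nat_coeffs_of_inCone hind hcont μ.2
  have hinj : Function.Injective coeffs := fun μ μ' h => Subtype.ext <| funext fun i => by
    exact_mod_cast congrFun ((hcoeffs μ).symm.trans (h ▸ hcoeffs μ')) i
  rw [← hinj.tsum_eq]
  · refine tsum_congr fun μ => ?_
    rw [if_pos ⟨μ, (hcoeffs μ).symm⟩, hcoeffs]
  · intro n hn
    obtain ⟨μ, hμ⟩ : ∃ μ : ι → ℤ, (fun i => (μ i : ℚ)) = ∑ j, (n j : ℚ) • α j := by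
      by_contra h
      exact hn (if_neg h)
    have hcone : InCone α μ := ⟨fun j => n j, fun j => Nat.cast_nonneg _, fun i => by
      have := congrFun hμ i
      simp only [Finset.sum_apply, Pi.smul_apply, smul_eq_mul] at this
      show (μ i : ℝ) = ∑ j, (n j : ℝ) * (α j i : ℝ)
      exact_mod_cast this⟩
    exact ⟨⟨μ, hcone⟩, hind.injective_sum_natCast_smul ((hcoeffs _).trans hμ)⟩

end Cone

theorem stmt3_general (k : ℕ) (α : Fin k → (Fin k → ℚ))
    (hind : LinearIndependent ℚ α)
    (hcont : ∀ m : Fin k → ℤ, (fun i => (m i : ℚ)) ∈ Submodule.span ℤ (Set.range α))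
    (Λ : AddSubgroup (Fin k → ℤ))
    (hΛ : ∀ v : Fin k → ℤ, v ∈ Λ ↔ ∀ j, ∃ m : ℤ, ∑ i, α j i * v i = (m : ℚ))
    [Fintype ((Fin k → ℤ) ⧸ Λ)]
    (F : ((Fin k → ℤ) ⧸ Λ) → ℂ) (ξ : Fin k → ℂ)
    (hF : ∀ v : Fin k → ℤ, F (QuotientAddGroup.mk v) =
      ∏ j, (1 - Complex.exp (2 * Real.pi * Complex.I * ∑ i, (α j i : ℂ) * (v i : ℂ)) *
        Complex.exp (2 * Real.pi * Complex.I * ∑ i, (α j i : ℂ) * ξ i))⁻¹)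
    (hξ : ∀ μ : Fin k → ℤ, μ ≠ 0 →
      (∃ t : Fin k → ℝ, (∀ j, 0 ≤ t j) ∧ ∀ i, (μ i : ℝ) = ∑ j, t j * (α j i : ℝ)) →
      (2 * Real.pi * Complex.I * ∑ i, (μ i : ℂ) * ξ i).re < 0) :
    (1 / (Fintype.card ((Fin k → ℤ) ⧸ Λ) : ℂ)) * ∑ γ, F γ =
      ∑' μ : {μ : Fin k → ℤ //
          ∃ t : Fin k → ℝ, (∀ j, 0 ≤ t j) ∧ ∀ i, ((μ : Fin k → ℤ) i : ℝ) = ∑ j, t j * (α j i : ℝ)},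
        Complex.exp (2 * Real.pi * Complex.I * ∑ i, ((μ : Fin k → ℤ) i : ℂ) * ξ i) := by
  classical
  set β : (Fin k → ℕ) → Fin k → ℚ := fun n => ∑ j, (n j : ℚ) • α j
  have hβΛ : ∀ n, ∀ v ∈ Λ, pairingChar (β n) v = 1 := fun n v hv => by
    rw [pairingChar_apply, expPair_sum_smul]
    exact prod_eq_one fun j _ => by
      rw [expPair_eq_one_of_sum_mul_eq_intCast _ _ ((hΛ v).mp hv j), one_pow]
  set χ := fun n => (pairingChar (β n)).liftQuotient Λ (hβΛ n)
  have hFχ : ∀ γ, HasSum (fun n => χ n γ * expPair (β n) ξ) (F γ) := by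
    intro γ
    induction γ using QuotientAddGroup.induction_on with | H v => ?_
    rw [hF]
    exact hasSum_pairingChar_mul_expPair α ξ (norm_expPair_lt_one hind.ne_zero hξ) v
  have hcard : (Fintype.card ((Fin k → ℤ) ⧸ Λ) : ℂ) ≠ 0 := Nat.cast_ne_zero.mpr Fintype.card_ne_zero
  calc (1 / (Fintype.card ((Fin k → ℤ) ⧸ Λ) : ℂ)) * ∑ γ, F γ
      = ∑' n, 1 / (Fintype.card ((Fin k → ℤ) ⧸ Λ) : ℂ) * ∑ γ, χ n γ * expPair (β n) ξ := by
        simp_rw [← (hFχ _).tsum_eq]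
        rw [← Summable.tsum_finsetSum fun γ _ => (hFχ γ).summable, tsum_mul_left]
    _ = ∑' n, if ∃ μ : Fin k → ℤ, (fun i => (μ i : ℚ)) = β n then expPair (β n) ξ else 0 :=
        tsum_congr fun n => by
          rw [← sum_mul, sum_liftQuotient_pairingChar]
          split_ifs
          · field_simp
          · simp
    _ = _ := (tsum_ite_eq_tsum_inCone hind hcont fun β => expPair β ξ).trans <|
        tsum_congr fun μ => by simp [expPair]

/-- Character identity for a simplicial cone (Lemma `char` in the paper).
Let `C ⊂ ℝ^k` be the simplicial cone generated by linearly independent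
rational vectors `α_1, …, α_k` whose `ℤ`-span `Λ_C*` contains `ℤ^k`; let
`Λ_C ⊆ ℤ^k` be the dual lattice (lattice vectors pairing integrally with all
`α_j`) and `Γ_C = ℤ^k/Λ_C` (a finite group).  For `γ ∈ Γ_C` set
`c_j(γ) = exp(2πi⟨α_j,γ⟩)` (well defined on cosets).  Then for all `ξ ∈ ℂ^k`
such that `Re(2πi⟨μ,ξ⟩) < 0` for all nonzero lattice points `μ` of the cone,
`(1/#Γ_C) Σ_{γ∈Γ_C} ∏_j (1 - c_j(γ)e^{2πi⟨α_j,ξ⟩})⁻¹ = Σ_{μ∈C∩ℤ^k} e^{2πi⟨μ,ξ⟩}`. -/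
theorem stmt3 (k : ℕ) (hk : 0 < k) (α : Fin k → (Fin k → ℚ))
    (hind : LinearIndependent ℚ α)
    (hcont : ∀ m : Fin k → ℤ, (fun i => (m i : ℚ)) ∈ Submodule.span ℤ (Set.range α))
    (Λ : AddSubgroup (Fin k → ℤ))
    (hΛ : ∀ v : Fin k → ℤ, v ∈ Λ ↔ ∀ j, ∃ m : ℤ, ∑ i, α j i * v i = (m : ℚ))
    [Fintype ((Fin k → ℤ) ⧸ Λ)]
    (F : ((Fin k → ℤ) ⧸ Λ) → ℂ) (ξ : Fin k → ℂ)
    (hF : ∀ v : Fin k → ℤ, F (QuotientAddGroup.mk v) =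
      ∏ j, (1 - Complex.exp (2 * Real.pi * Complex.I * ∑ i, (α j i : ℂ) * (v i : ℂ)) *
        Complex.exp (2 * Real.pi * Complex.I * ∑ i, (α j i : ℂ) * ξ i))⁻¹)
    (hξ : ∀ μ : Fin k → ℤ, μ ≠ 0 →
      (∃ t : Fin k → ℝ, (∀ j, 0 ≤ t j) ∧ ∀ i, (μ i : ℝ) = ∑ j, t j * (α j i : ℝ)) →
      (2 * Real.pi * Complex.I * ∑ i, (μ i : ℂ) * ξ i).re < 0) :
    (1 / (Fintype.card ((Fin k → ℤ) ⧸ Λ) : ℂ)) * ∑ γ, F γ =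
      ∑' μ : {μ : Fin k → ℤ //
          ∃ t : Fin k → ℝ, (∀ j, 0 ≤ t j) ∧ ∀ i, ((μ : Fin k → ℤ) i : ℝ) = ∑ j, t j * (α j i : ℝ)},
        Complex.exp (2 * Real.pi * Complex.I * ∑ i, ((μ : Fin k → ℤ) i : ℂ) * ξ i) :=
  stmt3_general k α hind hcont Λ hΛ F ξ hF hξ
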